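/- The map S is injective on Ω_β, it is of class C² there, its Jacobian determinant at every u ∈ Ω_β equals det DS(u) = (−1)^(k−1)·(∂Φ₀/∂x₁)(Γu), which never vanishes, and hence S is a C² diffeomorphism from Ω_β onto its image S(Ω_β). (Lemma 'S-diff'.) -/

import Mathlib

/-!
`S u = (γ⁻¹ u₂, …, γ⁻¹ u_k, F u)` with `F = γ^(k-1) Φ₀ ∘ Γ`. The Jacobian
matrix is then `γ⁻¹` times a shift in its first `k - 1` rows and `∇F` in its last row; expanding
along the first column gives `(-1)^(k-1) γ^(-(k-1)) ∂₁F = (-1)^(k-1) ∂₁Φ₀ ∘ Γ`, nonzero by the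
lower bound on `(∂₁Φ₀)²`. If `S u = S v`, then `u` and `v` differ at most in the first coordinate
and `F u = F v`; since `Ω_β` is a box, Rolle's theorem on the segment and `∂₁F ≠ 0` force `u = v`.
Finally, near every point of `S(Ω_β)` the inverse of `S` coincides, by injectivity, with the
local inverse of the inverse function theorem, which is `C²`.
(Coordinates are `0`-indexed: the paper's `x₁` is coordinate `0`.)
-/

open Topology

theorem Matrix.det_of_rows_castSucc_eq_shift {R : Type*} [CommRing R] {n : ℕ}
    (M : Matrix (Fin (n + 1)) (Fin (n + 1)) R) (c : R)
    (hM : ∀ (i : Fin n) j, M i.castSucc j = if i.succ = j then c else 0) :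
    M.det = (-1) ^ n * c ^ n * M (Fin.last n) 0 := by
  have hminor : M.submatrix Fin.castSucc Fin.succ = Matrix.diagonal fun _ => c := by
    ext i j
    simp [hM, Matrix.diagonal_apply]
  rw [Matrix.det_succ_column_zero, Fin.sum_univ_castSucc]
  simp [hM, Fin.succ_ne_zero, Fin.succAbove_last, hminor]
  ring

theorem eq_zero_of_apply_add_smul_eq {E : Type*} [NormedAddCommGroup E] [NormedSpace ℝ E]
    {F : E → ℝ} {U : Set E} {x e : E} {t : ℝ} (hU : Convex ℝ U)
    (hF : ∀ y ∈ U, DifferentiableAt ℝ F y) (he : ∀ y ∈ U, fderiv ℝ F y e ≠ 0)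
    (hx : x ∈ U) (hxt : x + t • e ∈ U) (h : F (x + t • e) = F x) : t = 0 := by
  have hseg : ∀ s ∈ Set.Icc (0 : ℝ) 1, x + s • t • e ∈ U := fun s hs =>
    hU.add_smul_mem hx hxt hs
  have hderiv : ∀ s ∈ Set.Icc (0 : ℝ) 1, HasDerivAt (fun s : ℝ => F (x + s • t • e))
      (fderiv ℝ F (x + s • t • e) (t • e)) s := fun s hs =>
    (hF _ (hseg s hs)).hasFDerivAt.comp_hasDerivAt s
      (((hasDerivAt_id s).smul_const (t • e)).const_add x |>.congr_deriv (one_smul ℝ _))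
  obtain ⟨s, hs, hs0⟩ := exists_hasDerivAt_eq_zero one_pos
    (fun s hs => (hderiv s hs).continuousAt.continuousWithinAt) (by simpa using h.symm)
    fun s hs => hderiv s (Set.Ioo_subset_Icc_self hs)
  rw [map_smul, smul_eq_mul] at hs0
  exact (mul_eq_zero.1 hs0).resolve_right (he _ (hseg s (Set.Ioo_subset_Icc_self hs)))

theorem ContDiffOn.contDiffOn_invFunOn_image {𝕂 E : Type*} [RCLike 𝕂] [NormedAddCommGroup E]
    [NormedSpace 𝕂 E] [FiniteDimensional 𝕂 E] {f : E → E} {U : Set E} {n : WithTop ℕ∞}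
    (hf : ContDiffOn 𝕂 n f U) (hU : IsOpen U) (hn : n ≠ 0) (hinj : U.InjOn f)
    (hdet : ∀ x ∈ U, LinearMap.det (fderiv 𝕂 f x : E →ₗ[𝕂] E) ≠ 0) :
    ContDiffOn 𝕂 n (Function.invFunOn f U) (f '' U) := by
  have := FiniteDimensional.complete 𝕂 E
  rintro _ ⟨a, ha, rfl⟩
  have hfa : ContDiffAt 𝕂 n f a := hf.contDiffAt (hU.mem_nhds ha)
  let e : E ≃L[𝕂] E := (LinearMap.equivOfDetNeZero _ (hdet a ha)).toContinuousLinearEquiv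
  have he : HasFDerivAt f (e : E →L[𝕂] E) a := (hfa.differentiableAt hn).hasFDerivAt
  have hs : HasStrictFDerivAt f (e : E →L[𝕂] E) a := hfa.hasStrictFDerivAt' he hn
  have hg : ContDiffAt 𝕂 n (hs.localInverse f e a) (f a) := hfa.to_localInverse he hn
  have himage : f '' U ∈ 𝓝 (f a) := by
    rw [← hs.map_nhds_eq_of_equiv]
    exact Filter.image_mem_map (hU.mem_nhds ha)
  have hmem : ∀ᶠ y in 𝓝 (f a), hs.localInverse f e a y ∈ U :=
    hs.localInverse_continuousAt.eventually_mem
      (hU.mem_nhds (hs.localInverse_apply_image.symm ▸ ha))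
  have hinv : Function.invFunOn f U =ᶠ[𝓝 (f a)] hs.localInverse f e a := by
    filter_upwards [himage, hmem, hs.eventually_right_inverse] with y ⟨b, hb, hby⟩ hyU hy
    subst hby
    exact hinj (Function.invFunOn_mem ⟨b, hb, rfl⟩) hyU
      ((Function.invFunOn_eq ⟨b, hb, rfl⟩).trans hy.symm)
  exact (hg.congr_of_eventuallyEq hinv).contDiffWithinAt

namespace EuclideanSpace

variable {ι : Type*}

theorem isOpen_setOf_forall_abs_lt [Finite ι] (r : ι → ℝ) :
    IsOpen {u : EuclideanSpace ℝ ι | ∀ j, |u j| < r j} := by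
  rw [Set.ofPred_forall]
  exact isOpen_iInter_of_finite fun j => isOpen_lt (by fun_prop) continuous_const

theorem convex_setOf_forall_abs_lt (r : ι → ℝ) :
    Convex ℝ {u : EuclideanSpace ℝ ι | ∀ j, |u j| < r j} := by
  rw [Set.ofPred_forall]
  refine convex_iInter fun j => ?_
  have hj : {u : EuclideanSpace ℝ ι | |u j| < r j}
      = (EuclideanSpace.proj (𝕜 := ℝ) j).toLinearMap ⁻¹' Set.Ioo (-r j) (r j) := by
    ext u
    simp [abs_lt]
  exact hj ▸ (convex_Ioo _ _).linear_preimage _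

theorem exists_continuousLinearMap_eq_of_apply_eq_mul [Fintype ι]
    {Γ : EuclideanSpace ℝ ι → EuclideanSpace ℝ ι} (d : ι → ℝ) (hΓ : ∀ x j, Γ x j = d j * x j) :
    ∃ Γ' : EuclideanSpace ℝ ι →L[ℝ] EuclideanSpace ℝ ι, ⇑Γ' = Γ :=
  ⟨LinearMap.toContinuousLinearMap
    { toFun := Γ
      map_add' := fun x y => by ext j; simp [hΓ, mul_add]
      map_smul' := fun a x => by ext j; simp [hΓ, mul_left_comm] }, rfl⟩

theorem mapsTo_setOf_forall_abs_lt {Γ : EuclideanSpace ℝ ι → EuclideanSpace ℝ ι} {d s : ι → ℝ}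
    (hd : ∀ j, 0 < d j) (hΓ : ∀ x j, Γ x j = d j * x j) :
    Set.MapsTo Γ {u | ∀ j, |u j| < s j} {x | ∀ j, |x j| < d j * s j} := fun u hu j => by
  rw [hΓ, abs_mul, abs_of_pos (hd j)]
  exact mul_lt_mul_of_pos_left (hu j) (hd j)

end EuclideanSpace

section ShiftSnoc

variable {n : ℕ}

noncomputable def shiftSnoc (c : ℝ) (F : EuclideanSpace ℝ (Fin (n + 1)) → ℝ)
    (u : EuclideanSpace ℝ (Fin (n + 1))) : EuclideanSpace ℝ (Fin (n + 1)) :=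
  WithLp.toLp 2 (Fin.snoc (fun i : Fin n => c * u i.succ) (F u))

variable {c : ℝ} {F : EuclideanSpace ℝ (Fin (n + 1)) → ℝ} {u : EuclideanSpace ℝ (Fin (n + 1))}

@[simp]
theorem shiftSnoc_apply_castSucc (i : Fin n) : shiftSnoc c F u i.castSucc = c * u i.succ := by
  simp [shiftSnoc]

@[simp]
theorem shiftSnoc_apply_last : shiftSnoc c F u (Fin.last n) = F u := by
  simp [shiftSnoc]

theorem eq_shiftSnoc {S : EuclideanSpace ℝ (Fin (n + 1)) → EuclideanSpace ℝ (Fin (n + 1))}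
    (hcast : ∀ u (i : Fin n), S u i.castSucc = c * u i.succ) (hlast : ∀ u, S u (Fin.last n) = F u) :
    S = shiftSnoc c F := by
  funext u
  ext i
  induction i using Fin.lastCases with
  | last => simp [hlast]
  | cast i => simp [hcast]

theorem ContDiffOn.shiftSnoc {m : WithTop ℕ∞} {s : Set (EuclideanSpace ℝ (Fin (n + 1)))}
    (hF : ContDiffOn ℝ m F s) : ContDiffOn ℝ m (shiftSnoc c F) s :=
  contDiffOn_piLp' 2 fun i => Fin.lastCases (by simpa) (fun i => by simp; fun_prop) i

theorem DifferentiableAt.shiftSnoc (hF : DifferentiableAt ℝ F u) :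
    DifferentiableAt ℝ (shiftSnoc c F) u :=
  (differentiableAt_piLp 2).2 fun i => Fin.lastCases (by simpa) (fun i => by simp; fun_prop) i

theorem det_fderiv_shiftSnoc (hF : DifferentiableAt ℝ F u) :
    LinearMap.det (fderiv ℝ (shiftSnoc c F) u :
        EuclideanSpace ℝ (Fin (n + 1)) →ₗ[ℝ] EuclideanSpace ℝ (Fin (n + 1)))
      = (-1) ^ n * c ^ n * fderiv ℝ F u (EuclideanSpace.single 0 1) := by
  have hcoord : ∀ i v, fderiv ℝ (shiftSnoc c F) u v i
      = fderiv ℝ (fun x => shiftSnoc c F x i) u v := fun i v => by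
    have h := ((PiLp.hasFDerivAt_apply (𝕜 := ℝ) 2 (shiftSnoc c F u) i).comp u
      hF.shiftSnoc.hasFDerivAt).fderiv
    exact (DFunLike.congr_fun h v).symm
  rw [← LinearMap.det_toMatrix (PiLp.basisFun 2 ℝ (Fin (n + 1))),
    Matrix.det_of_rows_castSucc_eq_shift _ c]
  · simp [LinearMap.toMatrix_apply, hcoord]
  · intro i j
    simp only [LinearMap.toMatrix_apply, PiLp.basisFun_apply, PiLp.basisFun_repr,
      ContinuousLinearMap.coe_coe, hcoord, shiftSnoc_apply_castSucc]
    rw [((PiLp.hasFDerivAt_apply (𝕜 := ℝ) 2 u i.succ).const_mul c).fderiv]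
    simp

theorem injOn_shiftSnoc {U : Set (EuclideanSpace ℝ (Fin (n + 1)))} (hc : c ≠ 0) (hU : Convex ℝ U)
    (hF : ∀ x ∈ U, DifferentiableAt ℝ F x)
    (hF₀ : ∀ x ∈ U, fderiv ℝ F x (EuclideanSpace.single 0 1) ≠ 0) :
    U.InjOn (shiftSnoc c F) := by
  intro u hu v hv huv
  have htail (i : Fin n) : u i.succ = v i.succ := by
    simpa [hc] using congrArg (· i.castSucc) huv
  have hv' : v = u + (v 0 - u 0) • EuclideanSpace.single 0 1 := by
    ext j
    cases j using Fin.cases <;> simp [htail, Fin.succ_ne_zero]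
  have hlast : F (u + (v 0 - u 0) • EuclideanSpace.single 0 1) = F u := by
    simpa [← hv'] using (congrArg (· (Fin.last n)) huv).symm
  have h₀ := eq_zero_of_apply_add_smul_eq hU hF hF₀ hu (hv' ▸ hv) hlast
  rw [hv', h₀, zero_smul, add_zero]

end ShiftSnoc

/-- **Lemma `S-diff`.** The map `S` is injective and C² on `Ω_β`, its Jacobian
determinant at every `u ∈ Ω_β` equals `(−1)^(k−1)·∂Φ₀/∂x₁(Γu)` and never vanishes,
and `S` is a C² diffeomorphism from `Ω_β` onto its image. -/
theorem S_diff (k : ℕ) (hk : 2 ≤ k)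
    (L β σ C₁ C₂ : ℝ)
    (hσ : 1 < σ) (hC₁ : 1 < C₁) (hC₂ : 1 < C₂)
    (γ : ℝ) (hγ : γ = (C₁ * σ) ^ (-(1 : ℝ) / 2))
    (Φ₀ : EuclideanSpace ℝ (Fin k) → ℝ)
    (cube : Set (EuclideanSpace ℝ (Fin k)))
    (hcube : cube = {x | ∀ j : Fin k, -(L + β) < x j ∧ x j < L + β})
    (hΦ : ContDiffOn ℝ 2 Φ₀ cube)
    (hd1 : ∀ x ∈ cube,
      C₁ ^ (k - 1) * C₂ * σ ^ k
        ≤ (fderiv ℝ Φ₀ x (EuclideanSpace.single (⟨0, by omega⟩ : Fin k) 1)) ^ 2)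
    (Γ : EuclideanSpace ℝ (Fin k) → EuclideanSpace ℝ (Fin k))
    (hΓ : ∀ x (j : Fin k), Γ x j = γ ^ (-((j : ℕ) : ℤ)) * x j)
    (Ωβ : Set (EuclideanSpace ℝ (Fin k)))
    (hΩβ : Ωβ = {u | ∀ j : Fin k, |u j| < γ ^ (j : ℕ) * (L + β)})
    (S : EuclideanSpace ℝ (Fin k) → EuclideanSpace ℝ (Fin k))
    (hS : ∀ u (i : Fin k),
      (∀ h : (i : ℕ) + 1 < k, S u i = u ⟨(i : ℕ) + 1, h⟩ / γ) ∧
      ((i : ℕ) = k - 1 → S u i = γ ^ (k - 1) * Φ₀ (Γ u))) :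
    Set.InjOn S Ωβ ∧
    ContDiffOn ℝ 2 S Ωβ ∧
    (∀ u ∈ Ωβ,
      LinearMap.det
          (fderiv ℝ S u : EuclideanSpace ℝ (Fin k) →ₗ[ℝ] EuclideanSpace ℝ (Fin k))
        = (-1 : ℝ) ^ (k - 1)
            * fderiv ℝ Φ₀ (Γ u) (EuclideanSpace.single (⟨0, by omega⟩ : Fin k) 1) ∧
      LinearMap.det
          (fderiv ℝ S u : EuclideanSpace ℝ (Fin k) →ₗ[ℝ] EuclideanSpace ℝ (Fin k)) ≠ 0) ∧
    ∃ Sinv : EuclideanSpace ℝ (Fin k) → EuclideanSpace ℝ (Fin k),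
      ContDiffOn ℝ 2 Sinv (S '' Ωβ) ∧
      (∀ u ∈ Ωβ, Sinv (S u) = u) ∧ (∀ y ∈ S '' Ωβ, S (Sinv y) = y) := by
  obtain ⟨n, rfl⟩ : ∃ n, k = n + 1 := ⟨k - 1, by omega⟩
  have hγ₀ : 0 < γ := hγ ▸ Real.rpow_pos_of_pos (by positivity) _
  obtain ⟨Γ, rfl⟩ := EuclideanSpace.exists_continuousLinearMap_eq_of_apply_eq_mul _ hΓ
  set F := fun u => γ ^ n * Φ₀ (Γ u)
  have hSF : S = shiftSnoc γ⁻¹ F :=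
    eq_shiftSnoc (fun u i => ((hS u i.castSucc).1 (by simp)).trans (div_eq_inv_mul _ _))
      (fun u => by simpa using (hS u (Fin.last n)).2)
  simp only [← abs_lt] at hcube
  have hΩ_open : IsOpen Ωβ := hΩβ ▸ EuclideanSpace.isOpen_setOf_forall_abs_lt _
  have hcube_open : IsOpen cube := hcube ▸ EuclideanSpace.isOpen_setOf_forall_abs_lt _
  have hmaps : Set.MapsTo Γ Ωβ cube := by
    have h := EuclideanSpace.mapsTo_setOf_forall_abs_lt
      (s := fun j : Fin (n + 1) => γ ^ (j : ℕ) * (L + β)) (fun j => zpow_pos hγ₀ _) hΓ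
    simpa [hcube, hΩβ, ← mul_assoc, hγ₀.ne'] using h
  have hΦ₀ : ∀ x ∈ cube, fderiv ℝ Φ₀ x (EuclideanSpace.single 0 1) ≠ 0 := fun x hx h => by
    have h1 := hd1 x hx
    rw [Fin.zero_eta, h, zero_pow two_ne_zero] at h1
    exact h1.not_gt (by positivity)
  have hF' : ∀ u ∈ Ωβ, HasFDerivAt F (γ ^ n • (fderiv ℝ Φ₀ (Γ u)).comp Γ) u := fun u hu =>
    have hΦu := (hΦ.contDiffAt (hcube_open.mem_nhds (hmaps hu))).differentiableAt two_ne_zero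
    (hΦu.hasFDerivAt.comp u Γ.hasFDerivAt).const_mul _
  have hF₀ : ∀ u ∈ Ωβ, fderiv ℝ F u (EuclideanSpace.single 0 1)
      = γ ^ n * fderiv ℝ Φ₀ (Γ u) (EuclideanSpace.single 0 1) := fun u hu => by
    have hΓ₀ : Γ (EuclideanSpace.single 0 1) = EuclideanSpace.single 0 1 := by
      ext j
      by_cases hj : j = 0 <;> simp [hΓ, hj]
    simp [(hF' u hu).fderiv, hΓ₀]
  have hdet : ∀ u ∈ Ωβ, LinearMap.det
      (fderiv ℝ S u : EuclideanSpace ℝ (Fin (n + 1)) →ₗ[ℝ] EuclideanSpace ℝ (Fin (n + 1)))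
        = (-1) ^ n * fderiv ℝ Φ₀ (Γ u) (EuclideanSpace.single 0 1) := fun u hu => by
    rw [hSF, det_fderiv_shiftSnoc (hF' u hu).differentiableAt, hF₀ u hu, inv_pow, mul_assoc,
      inv_mul_cancel_left₀ (pow_ne_zero _ hγ₀.ne')]
  have hdet_ne : ∀ u ∈ Ωβ, LinearMap.det
      (fderiv ℝ S u : EuclideanSpace ℝ (Fin (n + 1)) →ₗ[ℝ] EuclideanSpace ℝ (Fin (n + 1))) ≠ 0 :=
    fun u hu => hdet u hu ▸ mul_ne_zero (pow_ne_zero _ (by norm_num)) (hΦ₀ _ (hmaps hu))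
  have hinj : Ωβ.InjOn S := hSF ▸ injOn_shiftSnoc (inv_ne_zero hγ₀.ne')
    (hΩβ ▸ EuclideanSpace.convex_setOf_forall_abs_lt _) (fun u hu => (hF' u hu).differentiableAt)
    (fun u hu => hF₀ u hu ▸ mul_ne_zero (pow_ne_zero _ hγ₀.ne') (hΦ₀ _ (hmaps hu)))
  have hC2 : ContDiffOn ℝ 2 S Ωβ :=
    hSF ▸ (contDiffOn_const.mul (hΦ.comp Γ.contDiff.contDiffOn hmaps)).shiftSnoc
  refine ⟨hinj, hC2, fun u hu => ⟨by simpa using hdet u hu, hdet_ne u hu⟩, Function.invFunOn S Ωβ,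
    hC2.contDiffOn_invFunOn_image hΩ_open two_ne_zero hinj hdet_ne,
    fun u hu => hinj.leftInvOn_invFunOn hu, fun y hy => Function.invFunOn_eq hy⟩
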